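/- arXiv:1402.6048 — 4 statements merged into one kernel-verified Lean document; each statement's English description precedes it below -/
import Mathlib

section
/- For every integer s ≥ 5 and every nonnegative integer c with c ≤ (s² − 5s)/4, there exist nonnegative integers a₁, a₂, …, a_s such that a₁ + a₂ + ⋯ + a_s = s and a₁² + a₂² + ⋯ + a_s² = s + 2c. -/
/-!
A list of parts `k₁, …, kₘ` with `∑ kᵢ ≤ s` yields a solution: take each `kᵢ` followed by
`kᵢ - 1` zeros, and pad with ones. This turns a part `k` into `k.choose 2` towards `c`, so it is
enough to write `c` as a sum of binomials `kᵢ.choose 2` with `∑ kᵢ ≤ s`. By induction on `s`,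
either `c` already satisfies the bound for `s - 1`, or it lies in the top band, where one part
`k = ⌊(2s - 1)/3⌋` leaves a remainder within the bound for `s - k` once `s ≥ 42`. The band
cases with `s < 42` are settled by a finite search.
-/

def Realizable (s c : ℕ) : Prop :=
  ∃ L : List ℕ, L.length = s ∧ L.sum = s ∧ (L.map (· ^ 2)).sum = s + 2 * c

theorem realizable_zero (s : ℕ) : Realizable s 0 :=
  ⟨List.replicate s 1, by simp, by simp, by simp⟩

theorem two_mul_choose_two (n : ℕ) : 2 * n.choose 2 = n * (n - 1) := by
  cases n with
  | zero => simp
  | succ m => simpa [Nat.choose_one_right, mul_comm] using (Nat.add_one_mul_choose_eq m 1).symm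

theorem Realizable.add_part {s c : ℕ} (h : Realizable s c) (k : ℕ) :
    Realizable (s + k) (c + k.choose 2) := by
  cases k with
  | zero => simpa using h
  | succ m =>
    obtain ⟨L, hlen, hsum, hsq⟩ := h
    refine ⟨(m + 1) :: List.replicate m 0 ++ L, ?_, ?_, ?_⟩
    · simp only [List.cons_append, List.length_cons, List.length_append, List.length_replicate,
        hlen]
      omega
    · simp only [List.cons_append, List.sum_cons, List.sum_append, List.sum_replicate, nsmul_zero,
        hsum, zero_add]
      omega
    · simp only [List.cons_append, List.map_cons, List.map_append, List.map_replicate, ne_eq,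
        OfNat.ofNat_ne_zero, not_false_eq_true, zero_pow, List.sum_cons, List.sum_append,
        List.sum_replicate, nsmul_zero, hsq, zero_add, mul_add, two_mul_choose_two,
        add_tsub_cancel_right]
      ring

/-- `realizableSearch n s c` looks for at most `n` parts `k ≥ 2` with `∑ k ≤ s` and
`∑ k.choose 2 = c`. Trying the largest part first makes the search almost greedy, hence cheap
enough for the kernel. -/
def realizableSearch : ℕ → ℕ → ℕ → Bool
  | 0, _, c => c == 0
  | n + 1, s, c => c == 0 || (List.range' 2 (s - 1)).reverse.any fun k =>
      k * (k - 1) / 2 ≤ c && realizableSearch n (s - k) (c - k * (k - 1) / 2)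

theorem Realizable.of_realizableSearch {n s c : ℕ} (h : realizableSearch n s c) :
    Realizable s c := by
  induction n generalizing s c with
  | zero =>
    obtain rfl : c = 0 := by simpa [realizableSearch] using h
    exact realizable_zero s
  | succ n ih =>
    simp only [realizableSearch, Bool.or_eq_true, beq_iff_eq, List.any_eq_true, List.mem_reverse,
      List.mem_range'_1, Bool.and_eq_true, decide_eq_true_eq] at h
    obtain rfl | ⟨k, hk, hkc, hrec⟩ := h
    · exact realizable_zero s
    · have := (ih hrec).add_part k
      rwa [Nat.sub_add_cancel (by omega), Nat.choose_two_right, Nat.sub_add_cancel hkc] at this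

theorem realizableSearch_of_band_of_lt_42 : ∀ s < 42, ∀ c ≤ s ^ 2 / 4, 4 * c + 5 * s ≤ s ^ 2 →
    (s - 1) ^ 2 < 4 * c + 5 * (s - 1) → realizableSearch s s c := by
  decide +kernel

theorem exists_part_of_band {s c : ℕ} (hs : 42 ≤ s) (hband : (s - 1) ^ 2 < 4 * c + 5 * (s - 1))
    (hc : 4 * c + 5 * s ≤ s ^ 2) :
    ∃ k, 0 < k ∧ k ≤ s ∧ k.choose 2 ≤ c ∧ 4 * (c - k.choose 2) + 5 * (s - k) ≤ (s - k) ^ 2 := by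
  set k := (2 * s - 1) / 3
  -- The lower bound on `k` makes the remainder fit the bound for `s - k`; the upper one, together
  -- with `s ≥ 42`, keeps `k.choose 2 ≤ c` throughout the band.
  have hk : 2 * s ≤ 3 * k + 3 ∧ 3 * k + 1 ≤ 2 * s := by omega
  have hC := two_mul_choose_two k
  zify [(by omega : 1 ≤ k), (by omega : 1 ≤ s)] at hk hC hband hc
  have hCc : k.choose 2 ≤ c := by
    zify
    nlinarith [mul_nonneg (by linarith : (0 : ℤ) ≤ s - 42) (by linarith : (0 : ℤ) ≤ s - 1),
      mul_nonneg (by linarith : (0 : ℤ) ≤ 2 * s - 1 - 3 * k)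
        (by linarith : (0 : ℤ) ≤ 2 * s + 3 * k - 4)]
  refine ⟨k, by omega, by omega, hCc, ?_⟩
  zify [hCc, (by omega : k ≤ s)]
  nlinarith [mul_nonneg (by positivity : (0 : ℤ) ≤ k) (by linarith : (0 : ℤ) ≤ 3 * k + 3 - 2 * s)]

theorem realizable_of_four_mul_add_le {s c : ℕ} (hc : 4 * c + 5 * s ≤ s ^ 2) :
    Realizable s c := by
  induction s using Nat.strong_induction_on generalizing c with
  | _ s ih =>
    obtain rfl | hs := Nat.eq_zero_or_pos s
    · obtain rfl : c = 0 := by simpa using hc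
      exact realizable_zero 0
    by_cases hprev : 4 * c + 5 * (s - 1) ≤ (s - 1) ^ 2
    · simpa [Nat.sub_add_cancel hs] using (ih (s - 1) (by omega) hprev).add_part 1
    rw [not_le] at hprev
    by_cases hs42 : s < 42
    · exact .of_realizableSearch
        (realizableSearch_of_band_of_lt_42 s hs42 c (by omega) hc hprev)
    obtain ⟨k, hk, hks, hkc, hrest⟩ := exists_part_of_band (by omega) hprev hc
    simpa [Nat.sub_add_cancel hks, Nat.sub_add_cancel hkc] using
      (ih (s - k) (by omega) hrest).add_part k

theorem stmt0_general (s c : ℕ) (hc : (4 * c : ℤ) ≤ (s : ℤ) ^ 2 - 5 * s) :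
    ∃ a : Fin s → ℕ, ∑ i, a i = s ∧ ∑ i, (a i) ^ 2 = s + 2 * c := by
  obtain ⟨L, rfl, hsum, hsq⟩ := realizable_of_four_mul_add_le (s := s) (c := c) (by zify; linarith)
  exact ⟨fun i => L[i], by simpa using hsum, (Fin.sum_univ_fun_getElem L (· ^ 2)).trans hsq⟩

/-- For every integer `s ≥ 5` and every nonnegative integer `c` with `c ≤ (s² − 5s)/4`,
there exist nonnegative integers `a₁, …, a_s` summing to `s` whose squares sum to `s + 2c`. -/
theorem stmt0 (s c : ℕ) (hs : 5 ≤ s) (hc : (4 * c : ℤ) ≤ (s : ℤ) ^ 2 - 5 * s) :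
    ∃ a : Fin s → ℕ, ∑ i, a i = s ∧ ∑ i, (a i) ^ 2 = s + 2 * c :=
  stmt0_general s c hc
end

section
/- Let k ≥ 3 be an integer and let f_k(x) = C(x, k) = x(x−1)⋯(x−k+1)/k! be the real polynomial extending the binomial coefficient, which is strictly increasing for x ≥ k. Then for every real x ≥ 2k+1, f_k^{-1}(f_{k−1}(x)) < (k^{1/k} + 1)·x^{(k−1)/k}, where f_k^{-1} is the inverse of f_k on [k, ∞). -/
/-!
Write `k = m + 1`, `c = x ^ (m/k)` and `d = k ^ (1/k)`, so that `(d c)^k = k x^m`.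
Bounding the factors of `f_m(x)` above by `x` and those of `f_k(B)` below by `B - m` gives
`f_m(x) ≤ x^m / m! = (d c)^k / k! < (B - m)^k / k! ≤ f_k(B)` for `B = (d + 1) c`, where the strict
step is `c > m`, i.e. `x^m > m^(m+1)`, which holds once `x ≥ 2m` because `2^m > m`.
Monotonicity of `f_k` on `[k, ∞)` then turns `f_k(y) = f_m(x) < f_k(B)` into `y < B`.
-/

/-- The real polynomial extension `f_j(x) = x(x−1)⋯(x−j+1)/j!` of the binomial
coefficient `C(x, j)`. -/
noncomputable def fpoly (j : ℕ) (x : ℝ) : ℝ :=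
  (∏ i ∈ Finset.range j, (x - i)) / (Nat.factorial j)

lemma natCast_le_sub_one_of_mem_range {j i : ℕ} (hi : i ∈ Finset.range j) :
    (i : ℝ) ≤ j - 1 := by
  have : i + 1 ≤ j := Finset.mem_range.mp hi
  rw [le_sub_iff_add_le]
  exact_mod_cast this

lemma fpoly_strictMonoOn {k : ℕ} (hk : k ≠ 0) : StrictMonoOn (fpoly k) (Set.Ici (k : ℝ)) := by
  intro a ha b hb hab
  have hfactors : ∀ i ∈ Finset.range k, 0 < a - i := fun i hi => by
    linarith [natCast_le_sub_one_of_mem_range hi, Set.mem_Ici.mp ha]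
  refine div_lt_div_of_pos_right ?_ (by positivity)
  refine Finset.prod_lt_prod hfactors (fun i _ => by linarith) ⟨0, ?_, by simpa⟩
  exact Finset.mem_range.mpr (Nat.pos_of_ne_zero hk)

lemma fpoly_le_pow_div_factorial {j : ℕ} {x : ℝ} (hx : (j : ℝ) - 1 ≤ x) :
    fpoly j x ≤ x ^ j / j.factorial := by
  refine div_le_div_of_nonneg_right ?_ (by positivity)
  calc ∏ i ∈ Finset.range j, (x - i)
      ≤ ∏ _i ∈ Finset.range j, x := Finset.prod_le_prod
        (fun i hi => by linarith [natCast_le_sub_one_of_mem_range hi])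
        (fun i _ => by linarith [Nat.cast_nonneg (α := ℝ) i])
    _ = x ^ j := by rw [Finset.prod_const, Finset.card_range]

lemma pow_sub_div_factorial_le_fpoly {j : ℕ} {x : ℝ} (hx : (j : ℝ) - 1 ≤ x) :
    (x - (j - 1)) ^ j / j.factorial ≤ fpoly j x := by
  refine div_le_div_of_nonneg_right ?_ (by positivity)
  calc (x - (j - 1)) ^ j
      = ∏ _i ∈ Finset.range j, (x - (j - 1)) := by rw [Finset.prod_const, Finset.card_range]
    _ ≤ ∏ i ∈ Finset.range j, (x - i) := Finset.prod_le_prod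
        (fun _ _ => by linarith)
        (fun i hi => by linarith [natCast_le_sub_one_of_mem_range hi])

lemma rpow_div_succ_pow_succ (m : ℕ) {x : ℝ} (hx : 0 ≤ x) :
    (x ^ ((m : ℝ) / (m + 1))) ^ (m + 1) = x ^ m := by
  rw [← Real.rpow_natCast, ← Real.rpow_mul hx, ← Real.rpow_natCast x m]
  push_cast
  rw [div_mul_cancel₀ _ (by positivity)]

lemma natCast_lt_rpow_div_succ {m : ℕ} {x : ℝ} (hx : 2 * m ≤ x) :
    (m : ℝ) < x ^ ((m : ℝ) / (m + 1)) := by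
  have hx0 : 0 ≤ x := le_trans (by positivity) hx
  refine lt_of_pow_lt_pow_left₀ (m + 1) (by positivity) ?_
  rw [rpow_div_succ_pow_succ m hx0]
  obtain rfl | hm0 := m.eq_zero_or_pos
  · simp
  have hm : (m : ℝ) < 2 ^ m := by exact_mod_cast Nat.lt_two_pow_self
  calc (m : ℝ) ^ (m + 1) = m ^ m * m := pow_succ _ _
    _ < m ^ m * 2 ^ m := mul_lt_mul_of_pos_left hm (pow_pos (by exact_mod_cast hm0) m)
    _ = (2 * m) ^ m := by rw [mul_pow, mul_comm]
    _ ≤ x ^ m := by gcongr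

lemma root_succ_mul_rpow_pow_succ (m : ℕ) {x : ℝ} (hx : 0 ≤ x) :
    (((m : ℝ) + 1) ^ (1 / ((m : ℝ) + 1)) * x ^ ((m : ℝ) / (m + 1))) ^ (m + 1)
      = (m + 1) * x ^ m := by
  have hm : (0 : ℝ) < m + 1 := by positivity
  rw [mul_pow, rpow_div_succ_pow_succ m hx, ← Real.rpow_natCast, ← Real.rpow_mul hm.le]
  push_cast
  rw [one_div_mul_cancel hm.ne', Real.rpow_one]

lemma fpoly_lt_fpoly_succ {m : ℕ} {x : ℝ} (hx : 2 * m ≤ x) :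
    fpoly m x < fpoly (m + 1)
      ((((m : ℝ) + 1) ^ (1 / ((m : ℝ) + 1)) + 1) * x ^ ((m : ℝ) / (m + 1))) := by
  set c := x ^ ((m : ℝ) / (m + 1))
  set d := ((m : ℝ) + 1) ^ (1 / ((m : ℝ) + 1))
  have hx0 : 0 ≤ x := le_trans (by positivity) hx
  have hcm : (m : ℝ) < c := natCast_lt_rpow_div_succ hx
  have hdc : 0 < d * c := mul_pos (by positivity) (lt_of_le_of_lt (by positivity) hcm)
  have hfac : ((m + 1).factorial : ℝ) = (m + 1) * m.factorial := by
    push_cast [Nat.factorial_succ]; ring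
  calc fpoly m x ≤ x ^ m / m.factorial := fpoly_le_pow_div_factorial (by linarith)
    _ = (d * c) ^ (m + 1) / (m + 1).factorial := by
        rw [root_succ_mul_rpow_pow_succ m hx0, hfac, mul_div_mul_left _ _ (by positivity)]
    _ < ((d + 1) * c - m) ^ (m + 1) / (m + 1).factorial := by
        gcongr
        linarith
    _ ≤ fpoly (m + 1) ((d + 1) * c) := by
        have h := pow_sub_div_factorial_le_fpoly (j := m + 1) (x := (d + 1) * c)
        push_cast at h
        simpa only [add_sub_cancel_right] using h (by linarith)

/-- Let `k ≥ 3`. The function `f_k` is strictly increasing on `[k, ∞)`, and for every real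
`x ≥ 2k+1`, `f_k⁻¹(f_{k−1}(x)) < (k^{1/k} + 1)·x^{(k−1)/k}`: i.e. any `y ≥ k` with
`f_k(y) = f_{k−1}(x)` satisfies `y < (k^{1/k} + 1)·x^{(k−1)/k}`. -/
theorem stmt10 (k : ℕ) (hk : 3 ≤ k) :
    StrictMonoOn (fpoly k) (Set.Ici (k : ℝ)) ∧
      ∀ x : ℝ, 2 * k + 1 ≤ x → ∀ y : ℝ, (k : ℝ) ≤ y → fpoly k y = fpoly (k - 1) x →
        y < ((k : ℝ) ^ ((1 : ℝ) / k) + 1) * x ^ (((k : ℝ) - 1) / k) := by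
  obtain ⟨m, rfl⟩ : ∃ m, k = m + 1 := ⟨k - 1, by omega⟩
  have hmono := fpoly_strictMonoOn (Nat.succ_ne_zero m)
  refine ⟨hmono, fun x hx y hy hxy => ?_⟩
  push_cast at hx hy ⊢
  rw [add_sub_cancel_right]
  rw [Nat.add_sub_cancel] at hxy
  set c := x ^ ((m : ℝ) / (m + 1))
  set d := ((m : ℝ) + 1) ^ (1 / ((m : ℝ) + 1))
  have hm : (1 : ℝ) ≤ m := by exact_mod_cast (show 1 ≤ m by omega)
  have hcm : (m : ℝ) < c := natCast_lt_rpow_div_succ (by linarith)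
  have hd : 1 ≤ d := Real.one_le_rpow (by linarith) (by positivity)
  have hB : (m : ℝ) + 1 ≤ (d + 1) * c := by nlinarith
  refine (hmono.lt_iff_lt (by exact_mod_cast hy) (by exact_mod_cast hB)).mp ?_
  rw [hxy]
  exact fpoly_lt_fpoly_succ (by linarith)
end

section
/- For every integer r ≥ 49 and every integer b̄ with 0 ≤ b̄ ≤ C(r+2, 2), there exist nonnegative integers a₃, a₄, …, a_r such that ∑_{s=3}^{r} a_s · C(s, 3) = b̄ and ∑_{s=3}^{r} a_s · s ≤ r. -/
/-! Write `b = C(s,3) + b'` with `s` largest and recurse on `b'`; maximality of `s` gives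
`b' < C(s+1,3) - C(s,3) = C(s,2)`. If the greedy weight `w'` of `b'` satisfies `C(w' - 16, 2) ≤ b'`,
then `w' < s + 16`, so the weight of `b` is at most `2s + 15`. For `s ≥ 14` this restores
`C(w - 16, 2) ≤ C(2s - 1, 2) ≤ C(s,3) ≤ b`, and for `s ≥ 24` it even gives `C(w + 1, 2) < b`,
which forces `w ≤ r` whenever `b ≤ C(r+2,2)`. The values `b < C(24,3) = 2024` are checked by
evaluation. -/

theorem sum_count_mul_eq_sum_map {α : Type*} [DecidableEq α] (l : List α) {t : Finset α}
    (hl : ∀ x ∈ l, x ∈ t) (f : α → ℕ) : ∑ x ∈ t, l.count x * f x = (l.map f).sum := by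
  rw [Finset.sum_list_map_count]
  refine (Finset.sum_subset (fun x hx => hl x (List.mem_toFinset.1 hx)) ?_).symm
  intro x _ hx
  rw [List.count_eq_zero.2 (fun h => hx (List.mem_toFinset.2 h)), zero_mul]

theorem six_mul_choose_three (n : ℕ) : 6 * n.choose 3 = n * (n - 1) * (n - 2) := by
  have h := Nat.descFactorial_eq_factorial_mul_choose n 3
  simp only [Nat.descFactorial, show Nat.factorial 3 = 6 from rfl, Nat.sub_zero] at h
  rw [← h]; ring

theorem lt_choose_add_three (b : ℕ) : b < (b + 3).choose 3 := by
  have h := six_mul_choose_three (b + 3)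
  simp only [Nat.reduceSubDiff] at h
  nlinarith [Nat.zero_le (b * b * b), Nat.zero_le (b * b)]

theorem choose_two_sub_one_le_choose_three {s : ℕ} (hs : 14 ≤ s) :
    (2 * s - 1).choose 2 ≤ s.choose 3 := by
  obtain ⟨m, rfl⟩ := Nat.exists_eq_add_of_le' hs
  rw [show 2 * (m + 14) - 1 = 2 * m + 27 by omega]
  have h2 := two_mul_choose_two (2 * m + 27)
  have h3 := six_mul_choose_three (m + 14)
  simp only [Nat.reduceSubDiff] at h2 h3
  nlinarith [Nat.zero_le (m * m * m), Nat.zero_le (m * m)]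

theorem choose_two_add_lt_choose_three {s : ℕ} (hs : 24 ≤ s) :
    (2 * s + 16).choose 2 < s.choose 3 := by
  obtain ⟨m, rfl⟩ := Nat.exists_eq_add_of_le' hs
  rw [show 2 * (m + 24) + 16 = 2 * m + 64 by ring]
  have h2 := two_mul_choose_two (2 * m + 64)
  have h3 := six_mul_choose_three (m + 24)
  simp only [Nat.reduceSubDiff] at h2 h3
  nlinarith [Nat.zero_le (m * m * m), Nat.zero_le (m * m)]

/-- `s.choose 3` in a closed form, which the kernel evaluates much faster than `Nat.choose`. -/
def choose3 (s : ℕ) : ℕ := s * (s - 1) * (s - 2) / 6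

theorem choose3_eq_choose (s : ℕ) : choose3 s = s.choose 3 := by
  rw [choose3, Nat.choose_eq_descFactorial_div_factorial]
  simp only [Nat.descFactorial, Nat.sub_zero, mul_one]
  ring_nf

def greedyIndexFrom (b : ℕ) : ℕ → ℕ → ℕ
  | 0, s => s
  | fuel + 1, s => if choose3 (s + 1) ≤ b then greedyIndexFrom b fuel (s + 1) else s

def greedyIndex (b : ℕ) : ℕ := greedyIndexFrom b b 2

def greedyPartsAux : ℕ → ℕ → List ℕ
  | 0, _ => []
  | fuel + 1, b =>
    if b = 0 then [] else greedyIndex b :: greedyPartsAux fuel (b - choose3 (greedyIndex b))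

def greedyParts (b : ℕ) : List ℕ := greedyPartsAux b b

def greedyWeight (b : ℕ) : ℕ := (greedyParts b).sum

theorem greedyIndexFrom_spec {b : ℕ} :
    ∀ fuel s, s.choose 3 ≤ b →
      (greedyIndexFrom b fuel s).choose 3 ≤ b ∧
        (b < (greedyIndexFrom b fuel s + 1).choose 3 ∨ greedyIndexFrom b fuel s = s + fuel)
  | 0, s, hs => ⟨hs, Or.inr rfl⟩
  | fuel + 1, s, hs => by
    rw [greedyIndexFrom, choose3_eq_choose]
    split_ifs with hstep
    · obtain ⟨hle, hmax | hend⟩ := greedyIndexFrom_spec fuel (s + 1) hstep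
      · exact ⟨hle, Or.inl hmax⟩
      · exact ⟨hle, Or.inr (by omega)⟩
    · exact ⟨hs, Or.inl (not_le.1 hstep)⟩

theorem choose_greedyIndex_le (b : ℕ) : (greedyIndex b).choose 3 ≤ b :=
  (greedyIndexFrom_spec b 2 (Nat.zero_le b)).1

theorem lt_choose_greedyIndex_succ (b : ℕ) : b < (greedyIndex b + 1).choose 3 := by
  obtain ⟨-, hmax | hend⟩ := greedyIndexFrom_spec b 2 (Nat.zero_le b)
  · exact hmax
  · rw [greedyIndex, hend, show 2 + b + 1 = b + 3 by omega]
    exact lt_choose_add_three b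

theorem le_greedyIndex {b t : ℕ} (h : t.choose 3 ≤ b) : t ≤ greedyIndex b := by
  by_contra! hlt
  exact (h.trans_lt (lt_choose_greedyIndex_succ b)).not_ge (Nat.choose_le_choose 3 hlt)

theorem three_le_greedyIndex {b : ℕ} (hb : 0 < b) : 3 ≤ greedyIndex b :=
  le_greedyIndex hb

theorem sub_choose_greedyIndex_lt (b : ℕ) :
    b - (greedyIndex b).choose 3 < (greedyIndex b).choose 2 := by
  have hpascal :
      (greedyIndex b + 1).choose 3 = (greedyIndex b).choose 2 + (greedyIndex b).choose 3 :=
    Nat.choose_succ_succ' _ 2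
  have hlt := lt_choose_greedyIndex_succ b
  have hle := choose_greedyIndex_le b
  omega

theorem choose_greedyIndex_pos {b : ℕ} (hb : 0 < b) : 0 < (greedyIndex b).choose 3 :=
  Nat.choose_pos (three_le_greedyIndex hb)

theorem greedyPartsAux_congr_fuel {fuel fuel' b : ℕ} (h : b ≤ fuel) (h' : b ≤ fuel') :
    greedyPartsAux fuel b = greedyPartsAux fuel' b := by
  induction fuel generalizing fuel' b with
  | zero =>
    obtain rfl : b = 0 := by omega
    cases fuel' <;> rfl
  | succ fuel ih =>
    rcases Nat.eq_zero_or_pos b with rfl | hb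
    · cases fuel' <;> rfl
    obtain ⟨fuel', rfl⟩ := Nat.exists_eq_add_of_lt (hb.trans_le h')
    have hpos := choose_greedyIndex_pos hb
    rw [← choose3_eq_choose] at hpos
    simp only [greedyPartsAux, if_neg hb.ne']
    exact congrArg _ (ih (by omega) (by omega))

theorem greedyParts_eq_cons {b : ℕ} (hb : 0 < b) :
    greedyParts b = greedyIndex b :: greedyParts (b - (greedyIndex b).choose 3) := by
  obtain ⟨n, rfl⟩ := Nat.exists_eq_add_one_of_ne_zero hb.ne'
  have hpos := choose_greedyIndex_pos hb
  rw [greedyParts, greedyPartsAux, if_neg n.succ_ne_zero, choose3_eq_choose, greedyParts]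
  exact congrArg _ (greedyPartsAux_congr_fuel (by omega) le_rfl)

theorem greedyWeight_eq_add {b : ℕ} (hb : 0 < b) :
    greedyWeight b = greedyIndex b + greedyWeight (b - (greedyIndex b).choose 3) := by
  rw [greedyWeight, greedyParts_eq_cons hb, List.sum_cons, greedyWeight]

theorem sum_map_choose_greedyParts (b : ℕ) : ((greedyParts b).map (·.choose 3)).sum = b := by
  induction b using Nat.strong_induction_on with
  | _ b ih =>
    rcases Nat.eq_zero_or_pos b with rfl | hb
    · rfl
    rw [greedyParts_eq_cons hb, List.map_cons, List.sum_cons,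
      ih _ (Nat.sub_lt hb (choose_greedyIndex_pos hb))]
    exact Nat.add_sub_cancel' (choose_greedyIndex_le b)

theorem three_le_of_mem_greedyParts {b s : ℕ} (hs : s ∈ greedyParts b) : 3 ≤ s := by
  induction b using Nat.strong_induction_on with
  | _ b ih =>
    rcases Nat.eq_zero_or_pos b with rfl | hb
    · exact absurd hs List.not_mem_nil
    rw [greedyParts_eq_cons hb, List.mem_cons] at hs
    rcases hs with rfl | hs
    · exact three_le_greedyIndex hb
    · exact ih _ (Nat.sub_lt hb (choose_greedyIndex_pos hb)) hs

theorem greedyWeight_le_two_mul_greedyIndex_add {b : ℕ} (hb : 0 < b)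
    (hrem : (greedyWeight (b - (greedyIndex b).choose 3) - 16).choose 2 ≤
      b - (greedyIndex b).choose 3) :
    greedyWeight b ≤ 2 * greedyIndex b + 15 := by
  have hlt : greedyWeight (b - (greedyIndex b).choose 3) - 16 < greedyIndex b := by
    by_contra! h
    exact ((Nat.choose_le_choose 2 h).trans hrem).not_gt (sub_choose_greedyIndex_lt b)
  rw [greedyWeight_eq_add hb]
  omega

theorem twentyFour_le_greedyIndex {b : ℕ} (hb : 2024 ≤ b) : 24 ≤ greedyIndex b :=
  le_greedyIndex (by rwa [show Nat.choose 24 3 = 2024 by rfl])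

theorem choose_two_greedyWeight_bounds_of_lt {b : ℕ} (hb : b < 2024) :
    (greedyWeight b - 16).choose 2 ≤ b ∧
      (greedyWeight b ≤ 49 ∨ (greedyWeight b + 1).choose 2 < b) := by
  -- `Nat.choose_two_right` in reverse: the kernel evaluates the closed form quickly.
  have key : ∀ b < 2024, let w := greedyWeight b
      (w - 16) * (w - 16 - 1) / 2 ≤ b ∧ (w ≤ 49 ∨ (w + 1) * (w + 1 - 1) / 2 < b) := by
    decide +kernel
  simpa only [Nat.choose_two_right] using key b hb

theorem choose_two_greedyWeight_sub_le (b : ℕ) : (greedyWeight b - 16).choose 2 ≤ b := by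
  induction b using Nat.strong_induction_on with
  | _ b ih =>
    rcases lt_or_ge b 2024 with hsmall | hlarge
    · exact (choose_two_greedyWeight_bounds_of_lt hsmall).1
    have hb : 0 < b := by omega
    have hs := twentyFour_le_greedyIndex hlarge
    have hw := greedyWeight_le_two_mul_greedyIndex_add hb
      (ih _ (Nat.sub_lt hb (choose_greedyIndex_pos hb)))
    calc _ ≤ (2 * greedyIndex b - 1).choose 2 := Nat.choose_le_choose 2 (by omega)
      _ ≤ (greedyIndex b).choose 3 := choose_two_sub_one_le_choose_three (by omega)
      _ ≤ b := choose_greedyIndex_le b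

theorem choose_two_greedyWeight_add_one_lt {b : ℕ} (hb : 2024 ≤ b) :
    (greedyWeight b + 1).choose 2 < b := by
  have hw := greedyWeight_le_two_mul_greedyIndex_add (b := b) (by omega)
    (choose_two_greedyWeight_sub_le _)
  calc _ ≤ (2 * greedyIndex b + 16).choose 2 := Nat.choose_le_choose 2 (by omega)
    _ < (greedyIndex b).choose 3 := choose_two_add_lt_choose_three (twentyFour_le_greedyIndex hb)
    _ ≤ b := choose_greedyIndex_le b

theorem greedyWeight_le {r b : ℕ} (hr : 49 ≤ r) (hb : b ≤ (r + 2).choose 2) :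
    greedyWeight b ≤ r := by
  have key : greedyWeight b ≤ 49 ∨ (greedyWeight b + 1).choose 2 < b := by
    rcases lt_or_ge b 2024 with hsmall | hlarge
    · exact (choose_two_greedyWeight_bounds_of_lt hsmall).2
    · exact Or.inr (choose_two_greedyWeight_add_one_lt hlarge)
  rcases key with h | h
  · omega
  · by_contra! hr'
    exact (h.trans_le hb).not_ge (Nat.choose_le_choose 2 (by omega))

/-- For every integer `r ≥ 49` and every `0 ≤ b̄ ≤ C(r+2, 2)`, there exist nonnegative
integers `a₃, …, a_r` with `∑ a_s·C(s,3) = b̄` and `∑ a_s·s ≤ r`. -/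
theorem stmt13 (r : ℕ) (hr : 49 ≤ r) (bbar : ℕ) (hb : bbar ≤ (r + 2).choose 2) :
    ∃ a : ℕ → ℕ,
      (∑ s ∈ Finset.Icc 3 r, a s * s.choose 3 = bbar) ∧
      (∑ s ∈ Finset.Icc 3 r, a s * s ≤ r) := by
  have hweight := greedyWeight_le hr hb
  have hmem : ∀ s ∈ greedyParts bbar, s ∈ Finset.Icc 3 r := fun s hs =>
    Finset.mem_Icc.2 ⟨three_le_of_mem_greedyParts hs, (List.le_sum_of_mem hs).trans hweight⟩
  refine ⟨(greedyParts bbar).count, ?_, ?_⟩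
  · rw [sum_count_mul_eq_sum_map _ hmem, sum_map_choose_greedyParts]
  · rwa [sum_count_mul_eq_sum_map _ hmem (fun s => s), List.map_id']
end

section
/- Let A = (I_r | M) be an r × n rational matrix with M an r × k matrix and n = r + k. Then the number of invertible r × r submatrices of A (choices of r columns forming an invertible matrix) equals the number of invertible square submatrices of M, where the empty 0 × 0 matrix counts as invertible. -/
/-- The square submatrix of `M` determined by row set `s` and column set `t` of equal
cardinality is invertible (the empty submatrix counts as invertible). -/
def IsInvSquareSubmatrix {r k : ℕ} (M : Matrix (Fin r) (Fin k) ℚ)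
    (s : Finset (Fin r)) (t : Finset (Fin k)) : Prop :=
  ∃ (n : ℕ) (hs : s.card = n) (ht : t.card = n),
    IsUnit (Matrix.det (Matrix.of fun i j : Fin n =>
      M (s.orderEmbOfFin hs i) (t.orderEmbOfFin ht j)))

/-- The number of invertible square submatrices of `M`. -/
noncomputable def numInvSquareSubmatrices {r k : ℕ} (M : Matrix (Fin r) (Fin k) ℚ) : ℕ :=
  {p : Finset (Fin r) × Finset (Fin k) | IsInvSquareSubmatrix M p.1 p.2}.ncard

/-!
A set `c` of `r` columns of `(I | M)` consists of the identity columns `e i`, `i ∈ S`, and the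
columns `T` of `M`. Listing rows as `(S, Sᶜ)` and columns as `(S, T)`, the chosen submatrix
becomes block upper triangular with diagonal blocks `1` and `M[Sᶜ, T]`, so it is invertible
iff the minor `M[Sᶜ, T]` is. Since only the row and column *sets* of a square submatrix matter
for invertibility, this turns `c ↦ (Sᶜ, T)` into a bijection between the two counted sets;
`#c = r` corresponds to `#Sᶜ = #T`.
-/

open Function Set Matrix

section
variable {α β ι κ R : Type*}

theorem exists_equiv_comp_eq_of_range_eq {f : ι → α} {g : κ → α} (hf : Injective f)
    (hg : Injective g) (h : range f = range g) : ∃ e : ι ≃ κ, g ∘ e = f :=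
  ⟨(Equiv.ofInjective f hf).trans ((Equiv.setCongr h).trans (Equiv.ofInjective g hg).symm),
    funext fun _ => Equiv.apply_ofInjective_symm hg _⟩

variable [Fintype ι] [DecidableEq ι] [Fintype κ] [DecidableEq κ] [CommRing R]

theorem Matrix.isUnit_det_submatrix_equiv (N : Matrix κ κ R) (e e' : ι ≃ κ) :
    IsUnit (N.submatrix e e').det ↔ IsUnit N.det := by
  have := det_reindex e.symm e'.symm N
  rw [reindex_apply, Equiv.symm_symm, Equiv.symm_symm] at this
  rw [this, IsUnit.mul_iff]
  exact and_iff_right ((Equiv.Perm.sign _).isUnit.map (Int.castRingHom R))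

theorem Matrix.isUnit_det_submatrix_iff_of_range_eq (B : Matrix α β R) {f₁ : ι → α}
    {g₁ : ι → β} {f₂ : κ → α} {g₂ : κ → β} (hf₁ : Injective f₁) (hg₁ : Injective g₁)
    (hf₂ : Injective f₂) (hg₂ : Injective g₂) (hf : range f₁ = range f₂)
    (hg : range g₁ = range g₂) :
    IsUnit (B.submatrix f₁ g₁).det ↔ IsUnit (B.submatrix f₂ g₂).det := by
  obtain ⟨e, rfl⟩ := exists_equiv_comp_eq_of_range_eq hf₁ hf₂ hf
  obtain ⟨e', rfl⟩ := exists_equiv_comp_eq_of_range_eq hg₁ hg₂ hg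
  exact (B.submatrix f₂ g₂).isUnit_det_submatrix_equiv e e'

end

theorem Matrix.det_fromCols_one_submatrix {ι κ μ ν R : Type*} [Fintype μ] [DecidableEq μ]
    [Fintype ν] [DecidableEq ν] [DecidableEq ι] [CommRing R] (M : Matrix ι κ R)
    (e : μ ⊕ ν ≃ ι) (v : ν → κ) :
    ((fromCols 1 M).submatrix e (Sum.elim (fun a => .inl (e (.inl a))) (fun b => .inr (v b)))).det =
      (M.submatrix (e ∘ .inr) v).det := by
  have : (fromCols 1 M).submatrix e (Sum.elim (fun a => .inl (e (.inl a))) (fun b => .inr (v b))) =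
      fromBlocks 1 (M.submatrix (e ∘ .inl) v) 0 (M.submatrix (e ∘ .inr) v) := by
    ext (a | a) (b | b) <;> simp [one_apply, e.injective.eq_iff]
  rw [this, det_fromBlocks_zero₂₁, det_one, one_mul]

theorem Matrix.isUnit_det_fromCols_one_submatrix_iff {ι κ R : Type*} [Fintype ι]
    [LinearOrder ι] [LinearOrder κ] [CommRing R]
    (M : Matrix ι κ R) {g : ι → ι ⊕ κ} (hg : Injective g) {u : Finset (ι ⊕ κ)}
    (hu : range g = u) {n : ℕ} (hs : u.toLeftᶜ.card = n) (ht : u.toRight.card = n) :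
    IsUnit ((fromCols 1 M).submatrix id g).det ↔
      IsUnit (M.submatrix (u.toLeftᶜ.orderEmbOfFin hs) (u.toRight.orderEmbOfFin ht)).det := by
  let e := finSumEquivOfFinset rfl hs
  let cols : Fin u.toLeft.card ⊕ Fin n → ι ⊕ κ :=
    Sum.elim (fun a => .inl (e (.inl a))) fun b => .inr (u.toRight.orderEmbOfFin ht b)
  have hcols : Injective cols := by
    refine Injective.sumElim ?_ ?_ fun _ _ => Sum.inl_ne_inr
    · exact Sum.inl_injective.comp (e.injective.comp Sum.inl_injective)
    · exact Sum.inr_injective.comp (u.toRight.orderEmbOfFin ht).injective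
  have hcols_range : range cols = u := by
    ext (i | j)
    · have h := Set.ext_iff.mp (u.toLeft.range_orderEmbOfFin rfl) i
      simp only [mem_range, Finset.mem_coe, Finset.mem_toLeft] at h
      simpa [cols, e] using h
    · have h := Set.ext_iff.mp (u.toRight.range_orderEmbOfFin ht) j
      simp only [mem_range, Finset.mem_coe, Finset.mem_toRight] at h
      simpa [cols] using h
  rw [isUnit_det_submatrix_iff_of_range_eq _ injective_id hg e.injective hcols
    (by rw [range_id, e.range_eq_univ]) (hu.trans hcols_range.symm), det_fromCols_one_submatrix]
  rfl

theorem Finset.card_eq_card_iff_card_compl_toLeft_eq_card_toRight {ι κ : Type*} [Fintype ι]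
    [DecidableEq ι] (u : Finset (ι ⊕ κ)) :
    u.card = Fintype.card ι ↔ u.toLeftᶜ.card = u.toRight.card := by
  rw [← card_toLeft_add_card_toRight, card_compl]
  have := u.toLeft.card_le_univ
  omega

theorem IsInvSquareSubmatrix.card_eq {r k : ℕ} {M : Matrix (Fin r) (Fin k) ℚ}
    {s : Finset (Fin r)} {t : Finset (Fin k)} (h : IsInvSquareSubmatrix M s t) :
    s.card = t.card := by
  obtain ⟨n, hs, ht, -⟩ := h
  rw [hs, ht]

theorem isInvSquareSubmatrix_iff {r k n : ℕ} (M : Matrix (Fin r) (Fin k) ℚ)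
    {s : Finset (Fin r)} {t : Finset (Fin k)} (hs : s.card = n) (ht : t.card = n) :
    IsInvSquareSubmatrix M s t ↔
      IsUnit (M.submatrix (s.orderEmbOfFin hs) (t.orderEmbOfFin ht)).det := by
  refine ⟨?_, fun h => ⟨n, hs, ht, h⟩⟩
  rintro ⟨m, hs', ht', h⟩
  obtain rfl : m = n := hs'.symm.trans hs
  exact h

theorem isUnit_det_fromCols_one_orderEmbOfFin_iff {r k : ℕ} (M : Matrix (Fin r) (Fin k) ℚ)
    (c : Finset (Fin (r + k))) (hc : c.card = r) :
    IsUnit (of fun i j : Fin r =>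
        fromCols 1 M i (finSumFinEquiv.symm (c.orderEmbOfFin hc j))).det ↔
      IsInvSquareSubmatrix M (c.map finSumFinEquiv.symm.toEmbedding).toLeftᶜ
        (c.map finSumFinEquiv.symm.toEmbedding).toRight := by
  set u := c.map finSumFinEquiv.symm.toEmbedding
  have hcard : u.toLeftᶜ.card = u.toRight.card :=
    (u.card_eq_card_iff_card_compl_toLeft_eq_card_toRight).mp (by simp [u, hc])
  rw [isInvSquareSubmatrix_iff M hcard rfl]
  refine isUnit_det_fromCols_one_submatrix_iff M
    (finSumFinEquiv.symm.injective.comp (c.orderEmbOfFin hc).injective) ?_ hcard rfl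
  rw [range_comp, Finset.range_orderEmbOfFin, Finset.coe_map, Equiv.coe_toEmbedding]

/-- For `A = (I_r | M)`, the number of choices of `r` columns of `A` forming an invertible
`r × r` matrix equals the number of invertible square submatrices of `M`. -/
theorem stmt15 (r k : ℕ) (M : Matrix (Fin r) (Fin k) ℚ)
    (A : Matrix (Fin r) (Fin (r + k)) ℚ)
    (hA : A = Matrix.of fun i j => (Matrix.fromCols 1 M) i (finSumFinEquiv.symm j)) :
    {c : Finset (Fin (r + k)) | ∃ hc : c.card = r,
        IsUnit (Matrix.det (Matrix.of fun i j : Fin r => A i (c.orderEmbOfFin hc j)))}.ncard =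
      numInvSquareSubmatrices M := by
  subst hA
  let split : Finset (Fin (r + k)) ≃ Finset (Fin r) × Finset (Fin k) :=
    (Equiv.finsetCongr finSumFinEquiv.symm).trans <| Finset.sumEquiv.toEquiv.trans <|
      (compl_involutive.toPerm _).prodCongr (Equiv.refl _)
  refine ncard_congr' (split.subtypeEquiv fun c => ?_)
  set u := c.map finSumFinEquiv.symm.toEmbedding
  refine ⟨fun ⟨hc, h⟩ => (isUnit_det_fromCols_one_orderEmbOfFin_iff M c hc).mp h, fun h => ?_⟩
  have hc : c.card = r := by
    simpa [u] using (u.card_eq_card_iff_card_compl_toLeft_eq_card_toRight).mpr h.card_eq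
  exact ⟨hc, (isUnit_det_fromCols_one_orderEmbOfFin_iff M c hc).mpr h⟩
end
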